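/- For k = ⌊√n⌋ (n a sufficiently large perfect square for simplicity), the cyclically invariant function f defined by cyclic occurrence of the pattern g satisfies s⁰(f)·s¹(f) = Θ(√n), giving a cyclically invariant function where the product of 0-sensitivity and 1-sensitivity is Θ(√n) rather than Ω(n). -/

import Mathlib

/-- Flip the `i`-th bit of `x`. -/
def flipBit {n : ℕ} (x : Fin n → Bool) (i : Fin n) : Fin n → Bool :=
  fun j => if j = i then !x j else x j

/-- Flip all bits of `x` in the block `B`. -/
def flipSet {n : ℕ} (x : Fin n → Bool) (B : Finset (Fin n)) : Fin n → Bool :=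
  fun j => if j ∈ B then !x j else x j

/-- Sensitivity of `f` at the input `x`. -/
def sensAt {n : ℕ} (f : (Fin n → Bool) → Bool) (x : Fin n → Bool) : ℕ :=
  (Finset.univ.filter fun i => f (flipBit x i) ≠ f x).card

/-- Sensitivity of `f`. -/
def sens {n : ℕ} (f : (Fin n → Bool) → Bool) : ℕ :=
  Finset.univ.sup fun x => sensAt f x

/-- 0-sensitivity of `f`: max sensitivity over inputs where `f` is 0. -/
def sens0 {n : ℕ} (f : (Fin n → Bool) → Bool) : ℕ :=
  (Finset.univ.filter fun x => f x = false).sup fun x => sensAt f x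

/-- 1-sensitivity of `f`: max sensitivity over inputs where `f` is 1. -/
def sens1 {n : ℕ} (f : (Fin n → Bool) → Bool) : ℕ :=
  (Finset.univ.filter fun x => f x = true).sup fun x => sensAt f x

/-- Block sensitivity of `f` at `x`: the largest number of pairwise disjoint
nonempty blocks each of whose flips changes the value of `f` at `x`. -/
noncomputable def bsensAt {n : ℕ} (f : (Fin n → Bool) → Bool) (x : Fin n → Bool) : ℕ :=
  sSup {r : ℕ | ∃ B : Fin r → Finset (Fin n),
    (∀ j, (B j).Nonempty ∧ f (flipSet x (B j)) ≠ f x) ∧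
    ∀ j j', j ≠ j' → Disjoint (B j) (B j')}

/-- Block sensitivity of `f`. -/
noncomputable def bsens {n : ℕ} (f : (Fin n → Bool) → Bool) : ℕ :=
  Finset.univ.sup fun x => bsensAt f x

/-- The pattern predicate defining `g : {0,1}^{k²} → {0,1}`, reading a word as
`k` blocks of length `k`: block 1 equals `110^{k-2}`, the first five bits of
blocks `2..k` are 1, and the last three bits of block `k` are 1. -/
def GPat (k : ℕ) (z : ℕ → Bool) : Prop :=
  (∀ t < k, z t = decide (t < 2)) ∧
  (∀ j, 1 ≤ j → j < k → ∀ t < 5, z (j * k + t) = true) ∧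
  (∀ t, k - 3 ≤ t → t < k → z ((k - 1) * k + t) = true)

open Classical in
/-- The cyclically invariant function `f : {0,1}^n → {0,1}` with
`f(x) = 1` iff `x`, viewed cyclically, contains a contiguous length-`k²`
substring on which `g` evaluates to 1. -/
noncomputable def cycPatFn (k n : ℕ) (hn : 0 < n) : (Fin n → Bool) → Bool :=
  fun x => decide (∃ ℓ : ℕ, GPat k (fun t => x ⟨(ℓ + t) % n, Nat.mod_lt _ hn⟩))


/-!
A `1`-input contains an occurrence of `g`, and only the at most `7k` constrained bits of that
occurrence can be sensitive; conversely the word spelling out `g` (with zeros at the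
unconstrained bits) is sensitive at each of its at least `k` ones, because every occurrence of
`g` needs as many ones as `g` has. So `k ≤ s¹(f) ≤ 7k`.

If a `0`-input `x` is sensitive at `i`, then `x` contains `g` at some shift up to the single
bit `i`, and distinct sensitive bits give distinct shifts. Two placements of `g` at cyclic
distance at least `2` disagree on at least three bits constrained by both, whereas two
near-occurrences in `x` disagree only on the two flipped bits. Among three shifts two are at
cyclic distance at least `2`, hence `1 ≤ s⁰(f) ≤ 2`, and `s⁰(f) s¹(f)` lies between
`k = √n` and `14 k`.
-/

open Finset

section Sensitivity

variable {n : ℕ}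

lemma flipBit_apply_of_ne (x : Fin n → Bool) {i p : Fin n} (h : p ≠ i) : flipBit x i p = x p :=
  if_neg h

lemma flipBit_flipBit (x : Fin n → Bool) (i : Fin n) : flipBit (flipBit x i) i = x := by
  funext p
  by_cases h : p = i <;> simp [flipBit, h]

lemma sensAt_le_sens1 {f : (Fin n → Bool) → Bool} {x : Fin n → Bool} (hx : f x = true) :
    sensAt f x ≤ sens1 f :=
  le_sup (mem_filter.mpr ⟨mem_univ x, hx⟩)

lemma one_le_sens0_of_flipBit {f : (Fin n → Bool) → Bool} {x : Fin n → Bool} {i : Fin n}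
    (hx : f x = false) (hi : f (flipBit x i) = true) : 1 ≤ sens0 f :=
  calc 1 ≤ sensAt f x := card_pos.mpr ⟨i, by simp [hx, hi]⟩
    _ ≤ sens0 f := le_sup (mem_filter.mpr ⟨mem_univ x, hx⟩)

end Sensitivity

lemma exists_two_le_val_sub {n : ℕ} (hn : 4 ≤ n) {s : Finset (Fin n)} (hs : 2 < #s) :
    ∃ u ∈ s, ∃ v ∈ s, 2 ≤ (v - u).val ∧ (v - u).val + 2 ≤ n := by
  let e := s.orderEmbOfFin rfl
  let a := e ⟨0, by omega⟩
  let b := e ⟨1, by omega⟩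
  let c := e ⟨2, hs⟩
  have hab : a < b := e.strictMono (by simp [Fin.lt_def])
  have hbc : b < c := e.strictMono (by simp [Fin.lt_def])
  have hba : (b - a).val = b.val - a.val := Fin.coe_sub_iff_le.mpr hab.le
  have hcb : (c - b).val = c.val - b.val := Fin.coe_sub_iff_le.mpr hbc.le
  have hca : (c - a).val = c.val - a.val := Fin.coe_sub_iff_le.mpr (hab.trans hbc).le
  rw [Fin.lt_def] at hab hbc
  have hc := c.isLt
  have mem : ∀ t, e t ∈ s := s.orderEmbOfFin_mem rfl
  by_cases hac : c.val - a.val + 2 ≤ n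
  · exact ⟨a, mem _, c, mem _, by omega, by omega⟩
  by_cases hab' : 2 ≤ b.val - a.val
  · exact ⟨a, mem _, b, mem _, by omega, by omega⟩
  · exact ⟨b, mem _, c, mem _, by omega, by omega⟩

/-- A cyclic word of length `n` with some bits left unconstrained (`none`). -/
abbrev PartialWord (n : ℕ) := Fin n → Option Bool

namespace PartialWord

variable {n : ℕ} (P : PartialWord n)

def OccursAt (x : Fin n → Bool) (ℓ : Fin n) : Prop :=
  ∀ m b, P m = some b → x (ℓ + m) = b

open Classical in
noncomputable def cycFn (x : Fin n → Bool) : Bool :=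
  decide (∃ ℓ, P.OccursAt x ℓ)

def support : Finset (Fin n) :=
  univ.filter fun m => (P m).isSome

def ones : Finset (Fin n) :=
  univ.filter fun m => P m = some true

def onesWord (m : Fin n) : Bool :=
  decide (P m = some true)

def conflicts (d : Fin n) : Finset (Fin n) :=
  univ.filter fun m => ∃ a b, P m = some a ∧ P (m + d) = some b ∧ a ≠ b

variable {P}

lemma cycFn_eq_true {x : Fin n → Bool} : P.cycFn x = true ↔ ∃ ℓ, P.OccursAt x ℓ := by
  simp [cycFn]

lemma cycFn_eq_false {x : Fin n → Bool} : P.cycFn x = false ↔ ∀ ℓ, ¬ P.OccursAt x ℓ := by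
  simp [cycFn]

lemma OccursAt.flipBit {x : Fin n → Bool} {ℓ i : Fin n} (h : P.OccursAt x ℓ)
    (hi : ∀ m, (P m).isSome → ℓ + m ≠ i) : P.OccursAt (flipBit x i) ℓ := fun m b hm => by
  rw [flipBit_apply_of_ne x (hi m (by simp [hm]))]
  exact h m b hm

lemma sensAt_cycFn_le_card_support {x : Fin n → Bool} {ℓ : Fin n} (h : P.OccursAt x ℓ) :
    sensAt P.cycFn x ≤ #P.support := by
  refine (card_le_card fun i hi => ?_).trans (card_image_le (s := P.support) (f := (ℓ + ·)))
  simp only [mem_filter, mem_univ, true_and] at hi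
  by_contra hni
  refine hi ?_
  have hflip : P.OccursAt (flipBit x i) ℓ :=
    h.flipBit fun m hm he => hni (mem_image.mpr ⟨m, by simpa [support] using hm, he⟩)
  rw [cycFn_eq_true.mpr ⟨ℓ, hflip⟩, cycFn_eq_true.mpr ⟨ℓ, h⟩]

variable (P) in
lemma sens1_cycFn_le : sens1 P.cycFn ≤ #P.support :=
  Finset.sup_le fun _ hx =>
    let ⟨_, h⟩ := cycFn_eq_true.mp (mem_filter.mp hx).2
    sensAt_cycFn_le_card_support h

variable (P) in
lemma occursAt_onesWord [NeZero n] : P.OccursAt P.onesWord 0 := fun m b hm => by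
  cases b <;> simp [onesWord, hm]

lemma card_ones_le_of_occursAt {y : Fin n → Bool} {ℓ : Fin n} (h : P.OccursAt y ℓ) :
    #P.ones ≤ #(univ.filter fun p => y p = true) :=
  card_le_card_of_injOn (ℓ + ·)
    (fun m hm => by simpa [ones] using h m true (by simpa [ones] using hm))
    (add_right_injective ℓ).injOn

lemma cycFn_flipBit_onesWord {i : Fin n} (hi : P i = some true) :
    P.cycFn (flipBit P.onesWord i) = false := by
  have hones : (univ.filter fun p => flipBit P.onesWord i p = true) = P.ones.erase i := by
    ext p
    by_cases hp : p = i
    · simp [hp, flipBit, onesWord, hi]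
    · simp [hp, flipBit_apply_of_ne _ hp, onesWord, ones]
  have hi' : i ∈ P.ones := by simp [ones, hi]
  rw [Bool.eq_false_iff]
  intro htrue
  obtain ⟨ℓ, hℓ⟩ := cycFn_eq_true.mp htrue
  have := card_ones_le_of_occursAt hℓ
  rw [hones, card_erase_of_mem hi'] at this
  have := card_pos.mpr ⟨i, hi'⟩
  omega

variable (P) in
lemma card_ones_le_sens1 [NeZero n] : #P.ones ≤ sens1 P.cycFn := by
  have hw : P.cycFn P.onesWord = true := cycFn_eq_true.mpr ⟨0, P.occursAt_onesWord⟩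
  refine le_trans (card_le_card fun i hi => ?_) (sensAt_le_sens1 hw)
  have hi : P i = some true := by simpa [ones] using hi
  simp [cycFn_flipBit_onesWord hi, hw]

lemma one_le_sens0 [NeZero n] {i : Fin n} (hi : P i = some true) : 1 ≤ sens0 P.cycFn :=
  one_le_sens0_of_flipBit (cycFn_flipBit_onesWord hi)
    (by rw [flipBit_flipBit]; exact cycFn_eq_true.mpr ⟨0, P.occursAt_onesWord⟩)

variable (P) in
lemma card_conflicts_neg [NeZero n] (d : Fin n) : #(P.conflicts (-d)) = #(P.conflicts d) := by
  refine card_nbij' (· - d) (· + d) (fun m hm => ?_) (fun m hm => ?_) (fun m _ => by simp)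
    (fun m _ => by simp)
  · obtain ⟨a, b, ha, hb, hab⟩ := (mem_filter.mp hm).2
    rw [← sub_eq_add_neg] at hb
    exact mem_filter.mpr ⟨mem_univ _, b, a, hb, by rwa [sub_add_cancel], hab.symm⟩
  · obtain ⟨a, b, ha, hb, hab⟩ := (mem_filter.mp hm).2
    exact mem_filter.mpr ⟨mem_univ _, b, a, hb, by rwa [add_neg_cancel_right], hab.symm⟩

lemma eq_of_occursAt_flipBit {x : Fin n → Bool} {ℓ i j : Fin n} (hx : ¬ P.OccursAt x ℓ)
    (hi : P.OccursAt (flipBit x i) ℓ) (hj : P.OccursAt (flipBit x j) ℓ) : i = j := by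
  simp only [OccursAt, not_forall, exists_prop] at hx
  obtain ⟨m, b, hm, hxm⟩ := hx
  have mismatch : ∀ i, P.OccursAt (flipBit x i) ℓ → ℓ + m = i := fun i hi => by
    by_contra hne
    exact hxm (flipBit_apply_of_ne x hne ▸ hi m b hm)
  exact (mismatch i hi).symm.trans (mismatch j hj)

lemma card_conflicts_le_two {x : Fin n → Bool} {ℓ d i j : Fin n}
    (hi : P.OccursAt (flipBit x i) (ℓ + d)) (hj : P.OccursAt (flipBit x j) ℓ) :
    #(P.conflicts d) ≤ 2 := by
  refine (card_le_card_of_injOn (ℓ + d + ·) (t := {i, j}) (fun m hm => ?_)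
    (add_right_injective _).injOn).trans card_le_two
  obtain ⟨a, b, ha, hb, hab⟩ := (mem_filter.mp hm).2
  have hxi := hi m a ha
  have hxj := hj (m + d) b hb
  rw [← add_assoc] at hxj
  by_contra hnot
  simp only [coe_insert, coe_singleton, Set.mem_insert_iff, Set.mem_singleton_iff,
    not_or] at hnot
  rw [flipBit_apply_of_ne x hnot.1] at hxi
  rw [add_right_comm, flipBit_apply_of_ne x hnot.2] at hxj
  exact hab (hxi.symm.trans hxj)

theorem sens0_cycFn_le_two [NeZero n] (hn : 4 ≤ n)
    (hP : ∀ d : Fin n, 2 ≤ d.val → d.val + 2 ≤ n → 3 ≤ #(P.conflicts d)) :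
    sens0 P.cycFn ≤ 2 := by
  refine Finset.sup_le fun x hx => ?_
  have hfx := (mem_filter.mp hx).2
  have hx : ∀ ℓ, ¬ P.OccursAt x ℓ := cycFn_eq_false.mp hfx
  set S := univ.filter fun i => P.cycFn (flipBit x i) ≠ P.cycFn x
  have hshift : ∀ i ∈ S, ∃ ℓ, P.OccursAt (flipBit x i) ℓ := fun i hi => by
    rw [← cycFn_eq_true]
    simpa [S, hfx] using hi
  choose! shift hshift using hshift
  have hinj : Set.InjOn shift S := fun i hi j hj h =>
    eq_of_occursAt_flipBit (hx _) (hshift i hi) (h ▸ hshift j hj)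
  by_contra! h3
  obtain ⟨_, hu, _, hv, hd, hd'⟩ :=
    exists_two_le_val_sub hn (by rwa [card_image_of_injOn hinj] : 2 < #(S.image shift))
  obtain ⟨i, hi, rfl⟩ := mem_image.mp hu
  obtain ⟨j, hj, rfl⟩ := mem_image.mp hv
  have hle := card_conflicts_le_two (d := shift j - shift i) (by simpa using hshift j hj)
    (hshift i hi)
  have := hP _ hd hd'
  omega

end PartialWord

/-- The value that `g` prescribes for bit `m` of a word of length `n = k²`, or `none` if the bit
is free. -/
def gBit (k n m : ℕ) : Option Bool :=
  if m < k then some (decide (m < 2))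
  else if m % k < 5 ∨ n - 3 ≤ m then some true
  else none

def gPattern (k : ℕ) {n : ℕ} : PartialWord n :=
  fun m => gBit k n m

section GPattern

variable {k n : ℕ}

lemma gBit_of_lt_two (hk : 2 ≤ k) {m : ℕ} (hm : m < 2) : gBit k n m = some true := by
  simp [gBit, hm, show m < k by omega]

lemma gBit_of_two_le_of_lt {m : ℕ} (h2 : 2 ≤ m) (hm : m < k) : gBit k n m = some false := by
  simp [gBit, hm, show ¬ m < 2 by omega]

lemma gBit_of_mod_lt_five {m : ℕ} (hk : k ≤ m) (hm : m % k < 5) : gBit k n m = some true := by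
  simp [gBit, hm, show ¬ m < k by omega]

lemma gPat_iff (hk : 5 ≤ k) (hnk : n = k * k) (z : ℕ → Bool) :
    GPat k z ↔ ∀ m < n, ∀ b, gBit k n m = some b → z m = b := by
  have hlast : (k - 1) * k + k = n := by
    rw [hnk, Nat.sub_one_mul, Nat.sub_add_cancel (Nat.le_mul_self k)]
  constructor
  · rintro ⟨hfirst, hstart, hend⟩ m hm b hb
    unfold gBit at hb
    split_ifs at hb with hmk hm5
    · cases hb
      exact hfirst m hmk
    · cases hb
      rcases hm5 with hm5 | htail
      · have hblock : m / k < k := Nat.div_lt_of_lt_mul (hnk ▸ hm)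
        have := hstart (m / k) ((Nat.one_le_div_iff (by omega)).mpr (by omega)) hblock _ hm5
        rwa [Nat.div_add_mod'] at this
      · have := hend (m - (k - 1) * k) (by omega) (by omega)
        rwa [Nat.add_sub_cancel' (by omega)] at this
  · intro h
    refine ⟨fun t ht => h t (by nlinarith) _ (by simp [gBit, ht]),
      fun j hj1 hjk t ht => h _ ?_ true (gBit_of_mod_lt_five ?_ ?_),
      fun t ht1 ht2 => h _ (by omega) true ?_⟩
    · nlinarith
    · nlinarith
    · rw [Nat.mul_add_mod', Nat.mod_eq_of_lt (by omega)]
      exact ht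
    · have hm : ¬ (k - 1) * k + t < k := by nlinarith
      simp [gBit, hm, show n - 3 ≤ (k - 1) * k + t by omega]

lemma cycPatFn_eq_cycFn (hk : 5 ≤ k) (hnk : n = k * k) (hpos : 0 < n) :
    cycPatFn k n hpos = (gPattern k).cycFn := by
  funext x
  simp only [cycPatFn, PartialWord.cycFn, gPat_iff hk hnk, decide_eq_decide]
  constructor
  · rintro ⟨ℓ, h⟩
    refine ⟨⟨ℓ % n, Nat.mod_lt _ hpos⟩, fun m b hb => ?_⟩
    convert h m m.isLt b hb using 2
    ext
    simp [Fin.val_add]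
  · rintro ⟨ℓ, h⟩
    exact ⟨ℓ, fun m hm b hb => h ⟨m, hm⟩ b hb⟩

lemma card_support_gPattern_le (hk : 3 ≤ k) (hnk : n = k * k) :
    #(gPattern k : PartialWord n).support ≤ 7 * k := by
  let blockStarts := (range k ×ˢ range 5).image fun p => p.1 * k + p.2
  have hsub : (gPattern k : PartialWord n).support.map Fin.valEmbedding ⊆
      range k ∪ blockStarts ∪ Ico (n - 3) n := by
    intro v hv
    obtain ⟨m, hm, rfl⟩ := mem_map.mp hv
    replace hm : (gBit k n m).isSome := (mem_filter.mp hm).2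
    unfold gBit at hm
    simp only [Fin.valEmbedding_apply, mem_union, mem_range, mem_Ico]
    split_ifs at hm with hmk hm5
    · exact Or.inl (Or.inl hmk)
    · rcases hm5 with hm5 | htail
      · refine Or.inl (Or.inr (mem_image.mpr ⟨(m / k, m % k), ?_, Nat.div_add_mod' _ _⟩))
        exact mem_product.mpr
          ⟨mem_range.mpr (Nat.div_lt_of_lt_mul (by omega)), mem_range.mpr hm5⟩
      · exact Or.inr ⟨htail, m.isLt⟩
    · simp at hm
  calc #(gPattern k : PartialWord n).support
      = #((gPattern k : PartialWord n).support.map Fin.valEmbedding) := (card_map _).symm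
    _ ≤ #(range k ∪ blockStarts ∪ Ico (n - 3) n) := card_le_card hsub
    _ ≤ #(range k) + #blockStarts + #(Ico (n - 3) n) :=
      (card_union_le _ _).trans (add_le_add_left (card_union_le _ _) _)
    _ ≤ k + k * 5 + 3 := by
      gcongr
      · exact (card_range k).le
      · exact card_image_le.trans (by rw [card_product, card_range, card_range])
      · rw [Nat.card_Ico]
        omega
    _ ≤ 7 * k := by omega

lemma le_card_ones_gPattern (hk : 2 ≤ k) (hnk : n = k * k) :
    k ≤ #(gPattern k : PartialWord n).ones := by
  have hsub :
      (range k).image (· * k) ⊆ (gPattern k : PartialWord n).ones.map Fin.valEmbedding := by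
    intro m hm
    obtain ⟨j, hj, rfl⟩ := mem_image.mp hm
    have hj := mem_range.mp hj
    have hjk : j * k < n := hnk ▸ Nat.mul_lt_mul_of_pos_right hj (by omega)
    refine mem_map.mpr ⟨⟨j * k, hjk⟩, mem_filter.mpr ⟨mem_univ _, ?_⟩, rfl⟩
    show gBit k n (j * k) = some true
    rcases Nat.eq_zero_or_pos j with rfl | hj0
    · exact gBit_of_lt_two hk (by omega)
    · exact gBit_of_mod_lt_five (Nat.le_mul_of_pos_left k hj0) (by simp)
  calc k = #((range k).image (· * k)) := by
        rw [card_image_of_injective _ (mul_left_injective₀ (by omega)), card_range]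
    _ ≤ _ := card_le_card hsub
    _ = _ := card_map _

lemma exists_three_mod_lt_five (hk : 5 ≤ k) (a : ℕ) :
    ∃ u v w, a ≤ u ∧ u < v ∧ v < w ∧ w ≤ a + k - 3 ∧
      u % k < 5 ∧ v % k < 5 ∧ w % k < 5 := by
  have hres : ∀ m j t, m = k * j + t → t < 5 → m % k < 5 := fun m j t hm ht => by
    rw [hm, Nat.mul_add_mod, Nat.mod_eq_of_lt (by omega)]
    exact ht
  obtain ⟨q, r, hr, rfl⟩ : ∃ q r, r < k ∧ a = k * q + r :=
    ⟨a / k, a % k, Nat.mod_lt _ (by omega), (Nat.div_add_mod a k).symm⟩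
  have hq : k * (q + 1) = k * q + k := by ring
  rcases (by omega : r ≤ 2 ∨ r = 3 ∨ r = 4 ∨ 5 ≤ r) with h | h | h | h
  · exact ⟨_, _, _, le_rfl, Nat.lt_succ_self _, Nat.lt_succ_self _, by omega,
      hres _ q r rfl (by omega), hres _ q (r + 1) (by omega) (by omega),
      hres _ q (r + 2) (by omega) (by omega)⟩
  · exact ⟨k * q + r, k * q + r + 1, k * q + r + k - 3, by omega, by omega, by omega, by omega,
      hres _ q r rfl (by omega), hres _ q (r + 1) (by omega) (by omega),
      hres _ (q + 1) 0 (by omega) (by omega)⟩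
  · exact ⟨k * q + r, k * q + r + k - 4, k * q + r + k - 3, by omega, by omega, by omega,
      by omega, hres _ q r rfl (by omega), hres _ (q + 1) 0 (by omega) (by omega),
      hres _ (q + 1) 1 (by omega) (by omega)⟩
  · exact ⟨k * (q + 1), k * (q + 1) + 1, k * (q + 1) + 2, by omega, by omega, by omega,
      by omega, hres _ (q + 1) 0 (by omega) (by omega), hres _ (q + 1) 1 rfl (by omega),
      hres _ (q + 1) 2 rfl (by omega)⟩

lemma val_mem_conflicts_gPattern {d : Fin n} {m : ℕ} {a b : Bool}
    (hmd : m + d.val < n) (ha : gBit k n m = some a) (hb : gBit k n (m + d.val) = some b)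
    (hab : a ≠ b) : m ∈ ((gPattern k : PartialWord n).conflicts d).map Fin.valEmbedding :=
  mem_map.mpr ⟨⟨m, by omega⟩, mem_filter.mpr ⟨mem_univ _, a, b, ha,
    by rwa [gPattern, Fin.val_add_eq_of_add_lt hmd], hab⟩, rfl⟩

lemma three_le_card_conflicts_gPattern [NeZero n] (hk : 5 ≤ k) (hnk : n = k * k) (d : Fin n)
    (hd : 2 ≤ d.val) (hd' : d.val + 2 ≤ n) :
    3 ≤ #((gPattern k : PartialWord n).conflicts d) := by
  have h2k : 2 * k ≤ n := hnk ▸ Nat.mul_le_mul_right k (by omega)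
  wlog hdk : d.val + k ≤ n generalizing d
  · have hneg : (-d).val = n - d.val := by rw [Fin.val_neg', Nat.mod_eq_of_lt (by omega)]
    rw [← PartialWord.card_conflicts_neg]
    exact this (-d) (by omega) (by omega) (by omega)
  set S := ((gPattern k : PartialWord n).conflicts d).map Fin.valEmbedding
  have hzero_one : ∀ m t,
      2 ≤ m → m < k → m + d.val = t → k ≤ t → t % k < 5 → t < n → m ∈ S :=
    fun m t h2 hmk hmt hkt ht5 htn => val_mem_conflicts_gPattern (by omega)
      (gBit_of_two_le_of_lt h2 hmk) (hmt ▸ gBit_of_mod_lt_five hkt ht5) (by decide)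
  obtain ⟨u, v, w, huv, hvw, hu, hv, hw⟩ :
      ∃ u v w, u < v ∧ v < w ∧ u ∈ S ∧ v ∈ S ∧ w ∈ S := by
    by_cases hd2 : d.val = 2
    · exact ⟨0, k - 2, k - 1, by omega, by omega,
        val_mem_conflicts_gPattern (by omega) (gBit_of_lt_two (by omega) (by omega))
          (gBit_of_two_le_of_lt (by omega) (by omega)) (by decide),
        hzero_one _ k (by omega) (by omega) (by omega) le_rfl (by simp) (by omega),
        hzero_one _ (k + 1) (by omega) (by omega) (by omega) (by omega)
          (by rw [Nat.add_mod_left, Nat.mod_eq_of_lt (by omega)]; omega) (by omega)⟩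
    -- the zeros `2, …, k - 1` of the first block, shifted by `d ≥ 3`, cover `k - 2` consecutive
    -- positions, which meet at least three of the runs `11111`
    · obtain ⟨u, v, w, hu, huv, hvw, hw, hu5, hv5, hw5⟩ :=
        exists_three_mod_lt_five hk (d.val + 2)
      have hkt : ∀ t, d.val + 2 ≤ t → t % k < 5 → k ≤ t := fun t ht ht5 => by
        by_contra! htk
        rw [Nat.mod_eq_of_lt htk] at ht5
        omega
      exact ⟨u - d.val, v - d.val, w - d.val, by omega, by omega,
        hzero_one _ u (by omega) (by omega) (by omega) (hkt u hu hu5) hu5 (by omega),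
        hzero_one _ v (by omega) (by omega) (by omega) (hkt v (by omega) hv5) hv5 (by omega),
        hzero_one _ w (by omega) (by omega) (by omega) (hkt w (by omega) hw5) hw5 (by omega)⟩
  rw [← card_map Fin.valEmbedding]
  exact two_lt_card.mpr ⟨u, hu, v, hv, w, hw, by omega, by omega, by omega⟩

end GPattern

/-- With `n = k²` a perfect square (`k ≥ 8`), the cyclically invariant
pattern function satisfies `s⁰(f)·s¹(f) = Θ(√n)`. -/
theorem cycPatFn_sens0_mul_sens1_theta_sqrt :
    ∃ c₁ : ℝ, 0 < c₁ ∧ ∃ c₂ : ℝ, 0 < c₂ ∧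
      ∀ (n k : ℕ) (h8 : 8 ≤ k) (hsq : n = k ^ 2) (hpos : 0 < n),
        c₁ * Real.sqrt (n : ℝ) ≤
            (sens0 (cycPatFn k n hpos) : ℝ) * (sens1 (cycPatFn k n hpos) : ℝ) ∧
          (sens0 (cycPatFn k n hpos) : ℝ) * (sens1 (cycPatFn k n hpos) : ℝ) ≤
            c₂ * Real.sqrt (n : ℝ) := by
  refine ⟨1, one_pos, 14, by norm_num, fun n k h8 hsq hpos => ?_⟩
  have : NeZero n := NeZero.of_pos hpos
  have hnk : n = k * k := hsq.trans (sq k)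
  have hsqrt : Real.sqrt (n : ℝ) = k := by rw [hsq, Nat.cast_pow, Real.sqrt_sq k.cast_nonneg]
  rw [cycPatFn_eq_cycFn (by omega) hnk hpos, hsqrt]
  set P : PartialWord n := gPattern k
  have hs0 : 1 ≤ sens0 P.cycFn :=
    PartialWord.one_le_sens0 (i := 0) (gBit_of_lt_two (by omega) (by simp))
  have hs0' : sens0 P.cycFn ≤ 2 :=
    PartialWord.sens0_cycFn_le_two (by nlinarith) (three_le_card_conflicts_gPattern (by omega) hnk)
  have hs1 : k ≤ sens1 P.cycFn :=
    (le_card_ones_gPattern (by omega) hnk).trans P.card_ones_le_sens1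
  have hs1' : sens1 P.cycFn ≤ 7 * k :=
    P.sens1_cycFn_le.trans (card_support_gPattern_le (by omega) hnk)
  constructor
  · rw [one_mul]
    exact_mod_cast (by nlinarith : k ≤ sens0 P.cycFn * sens1 P.cycFn)
  · exact_mod_cast (by nlinarith : sens0 P.cycFn * sens1 P.cycFn ≤ 14 * k)
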